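/- (Equivalence of the two characterizations of the weakened stable dominant energy condition) Let T be a stress-energy tensor on (N+1)-dimensional Minkowski space. Then the following are equivalent: (i) for every future-directed causal vector v, the vector u(v) = -ηTv is future-directed timelike or zero; (ii) either T = 0, or for every future-directed causal vector v, the vector u(v) is future-directed timelike. -/

import Mathlib

open Matrix

/-- The Minkowski metric `diag(-1,1,…,1)` on `ℝ^{N+1}`. -/
noncomputable def eta (N : ℕ) : Matrix (Fin (N+1)) (Fin (N+1)) ℝ :=
  Matrix.diagonal (fun i => if i = 0 then (-1 : ℝ) else 1)

/-- The Minkowski bilinear form `η(x,y) = -x₀y₀ + ∑ᵢ xᵢyᵢ`. -/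
noncomputable def mdot {N : ℕ} (x y : Fin (N+1) → ℝ) : ℝ :=
  x ⬝ᵥ (eta N).mulVec y

/-- Future-directed timelike: `η(v,v) < 0` and `v₀ > 0`. -/
def FDTimelike {N : ℕ} (v : Fin (N+1) → ℝ) : Prop :=
  mdot v v < 0 ∧ 0 < v 0

/-- Future-directed lightlike: `v ≠ 0`, `η(v,v) = 0` and `v₀ > 0`. -/
def FDLightlike {N : ℕ} (v : Fin (N+1) → ℝ) : Prop :=
  v ≠ 0 ∧ mdot v v = 0 ∧ 0 < v 0

/-- Future-directed causal: future-directed timelike or lightlike. -/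
def FDCausal {N : ℕ} (v : Fin (N+1) → ℝ) : Prop :=
  FDTimelike v ∨ FDLightlike v

/-- The bilinear form associated to a matrix: `T(v,w) = vᵀ T w`. -/
noncomputable def Tbil {N : ℕ} (T : Matrix (Fin (N+1)) (Fin (N+1)) ℝ)
    (v w : Fin (N+1) → ℝ) : ℝ :=
  v ⬝ᵥ T.mulVec w

/-- The endomorphism associated to a stress-energy tensor: `u(v) = -ηTv`. -/
noncomputable def endo {N : ℕ} (T : Matrix (Fin (N+1)) (Fin (N+1)) ℝ)
    (v : Fin (N+1) → ℝ) : Fin (N+1) → ℝ :=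
  -((eta N).mulVec (T.mulVec v))

/-- The dominant energy condition: every future-directed causal vector is
sent by the associated endomorphism to a future-directed causal vector or zero. -/
def DEC {N : ℕ} (T : Matrix (Fin (N+1)) (Fin (N+1)) ℝ) : Prop :=
  ∀ v : Fin (N+1) → ℝ, FDCausal v → FDCausal (endo T v) ∨ endo T v = 0

/-! If `u(v₀) = 0` for a causal `v₀`, then `T v₀ = 0`, so by symmetry of `T`
`η(u(w), v₀) = -T(w, v₀) = -T(v₀, w) = 0` for every `w`. By the reversed Cauchy–Schwarz
inequality a future timelike vector has negative product with every future causal vector,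
so no `u(w)` is timelike; under (i) this forces `u = 0` on the timelike cone, which spans,
hence `T = 0`. -/

section Minkowski

variable {N : ℕ}

lemma mdot_eq (x y : Fin (N+1) → ℝ) :
    mdot x y = -(x 0 * y 0) + ∑ i : Fin N, x i.succ * y i.succ := by
  simp [mdot, eta, mulVec_diagonal, dotProduct, Fin.sum_univ_succ, Fin.succ_ne_zero]

lemma eta_mul_eta : eta N * eta N = 1 := by
  rw [eta, diagonal_mul_diagonal, ← diagonal_one]
  congr 1
  funext i
  split_ifs <;> norm_num

lemma eta_transpose : (eta N)ᵀ = eta N := diagonal_transpose _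

lemma fdTimelike_iff (v : Fin (N+1) → ℝ) :
    FDTimelike v ↔ ∑ i : Fin N, v i.succ ^ 2 < v 0 ^ 2 ∧ 0 < v 0 := by
  simp only [FDTimelike, mdot_eq, sq]
  constructor <;> rintro ⟨h, h0⟩ <;> exact ⟨by linarith, h0⟩

lemma FDCausal.spatial_le_and_pos {v : Fin (N+1) → ℝ} (hv : FDCausal v) :
    ∑ i : Fin N, v i.succ ^ 2 ≤ v 0 ^ 2 ∧ 0 < v 0 := by
  rcases hv with ⟨h, h0⟩ | ⟨-, h, h0⟩ <;> rw [mdot_eq] at h <;> simp only [sq] <;>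
    exact ⟨by linarith, h0⟩

-- The reversed Cauchy–Schwarz inequality of Minkowski space.
lemma mdot_neg_of_fdTimelike_of_fdCausal {x y : Fin (N+1) → ℝ}
    (hx : FDTimelike x) (hy : FDCausal y) : mdot x y < 0 := by
  obtain ⟨hxs, hx0⟩ := (fdTimelike_iff x).1 hx
  obtain ⟨hys, hy0⟩ := hy.spatial_le_and_pos
  have hcs := Finset.sum_mul_sq_le_sq_mul_sq Finset.univ (fun i : Fin N => x i.succ)
    (fun i : Fin N => y i.succ)
  have hxnn : 0 ≤ ∑ i : Fin N, x i.succ ^ 2 := by positivity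
  have hsq : (∑ i : Fin N, x i.succ * y i.succ) ^ 2 < (x 0 * y 0) ^ 2 :=
    calc _ ≤ (∑ i : Fin N, x i.succ ^ 2) * ∑ i : Fin N, y i.succ ^ 2 := hcs
      _ ≤ (∑ i : Fin N, x i.succ ^ 2) * y 0 ^ 2 := by gcongr
      _ < x 0 ^ 2 * y 0 ^ 2 := by gcongr
      _ = (x 0 * y 0) ^ 2 := by ring
  have := (abs_lt.1 (abs_lt_of_sq_lt_sq hsq (by positivity))).2
  rw [mdot_eq]
  linarith

lemma eta_mulVec_endo (T : Matrix (Fin (N+1)) (Fin (N+1)) ℝ) (v : Fin (N+1) → ℝ) :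
    eta N *ᵥ endo T v = -(T *ᵥ v) := by
  rw [endo, mulVec_neg, mulVec_mulVec, eta_mul_eta, one_mulVec]

lemma endo_eq_zero_iff (T : Matrix (Fin (N+1)) (Fin (N+1)) ℝ) (v : Fin (N+1) → ℝ) :
    endo T v = 0 ↔ T *ᵥ v = 0 := by
  refine ⟨fun h => ?_, fun h => by simp [endo, h]⟩
  rw [← neg_eq_zero, ← eta_mulVec_endo, h, mulVec_zero]

lemma mdot_endo (T : Matrix (Fin (N+1)) (Fin (N+1)) ℝ) (w y : Fin (N+1) → ℝ) :
    mdot (endo T w) y = -(T *ᵥ w ⬝ᵥ y) := by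
  rw [mdot, endo, neg_dotProduct, dotProduct_mulVec, vecMul_mulVec, ← eta_transpose,
    ← transpose_mul, eta_transpose, eta_mul_eta]
  simp

lemma not_fdTimelike_endo_of_mulVec_eq_zero {T : Matrix (Fin (N+1)) (Fin (N+1)) ℝ}
    (hT : T.IsSymm) {v : Fin (N+1) → ℝ} (hv : FDCausal v) (hTv : T *ᵥ v = 0)
    (w : Fin (N+1) → ℝ) : ¬ FDTimelike (endo T w) := fun hw => by
  have := mdot_neg_of_fdTimelike_of_fdCausal hw hv
  rw [mdot_endo, dotProduct_comm, dotProduct_mulVec, ← mulVec_transpose, hT.eq, hTv,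
    zero_dotProduct] at this
  simp at this

lemma fdTimelike_single_zero_add_single (j : Fin (N+1)) {a b : ℝ} (h : |b| < a) :
    FDTimelike (Pi.single 0 a + Pi.single j b : Fin (N+1) → ℝ) := by
  rw [fdTimelike_iff]
  rcases Fin.eq_zero_or_eq_succ j with rfl | ⟨k, rfl⟩
  · have hab : 0 < a + b := by linarith [neg_abs_le b]
    simpa using ⟨by positivity, hab⟩
  · simpa [Pi.single_apply, Fin.succ_ne_zero, (Fin.succ_ne_zero k).symm, Fin.succ_inj] using
      ⟨sq_lt_sq.2 (h.trans_le (le_abs_self a)), (abs_nonneg b).trans_lt h⟩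

lemma eq_zero_of_forall_fdTimelike_mulVec_eq_zero {T : Matrix (Fin (N+1)) (Fin (N+1)) ℝ}
    (hT : ∀ v, FDTimelike v → T *ᵥ v = 0) : T = 0 := by
  have hsum (j : Fin (N+1)) {a b : ℝ} (h : |b| < a) :
      T *ᵥ Pi.single 0 a + T *ᵥ Pi.single j b = 0 := by
    rw [← mulVec_add]
    exact hT _ (fdTimelike_single_zero_add_single j h)
  ext i j
  have hcol : T *ᵥ Pi.single j 1 = 0 := by
    have h₁ := hsum j (a := 2) (b := 1) (by norm_num)
    have h₀ := hsum j (a := 2) (b := 0) (by norm_num)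
    rw [Pi.single_zero, mulVec_zero, add_zero] at h₀
    rwa [h₀, zero_add] at h₁
  simpa [mulVec_single_one] using congrFun hcol i

end Minkowski

theorem wsdec_characterizations_general {N : ℕ}
    (T : Matrix (Fin (N+1)) (Fin (N+1)) ℝ) (hsymm : T.IsSymm) :
    (∀ v : Fin (N+1) → ℝ, FDCausal v → FDTimelike (endo T v) ∨ endo T v = 0) ↔
    (T = 0 ∨ ∀ v : Fin (N+1) → ℝ, FDCausal v → FDTimelike (endo T v)) := by
  refine ⟨fun h => or_iff_not_imp_right.2 fun hnot => ?_, ?_⟩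
  · push Not at hnot
    obtain ⟨v₀, hv₀, hnt⟩ := hnot
    have hTv₀ : T *ᵥ v₀ = 0 := (endo_eq_zero_iff T v₀).1 ((h v₀ hv₀).resolve_left hnt)
    refine eq_zero_of_forall_fdTimelike_mulVec_eq_zero fun w hw => (endo_eq_zero_iff T w).1 ?_
    exact (h w (Or.inl hw)).resolve_left (not_fdTimelike_endo_of_mulVec_eq_zero hsymm hv₀ hTv₀ w)
  · rintro (rfl | h) v hv
    · exact Or.inr ((endo_eq_zero_iff 0 v).2 (zero_mulVec v))
    · exact Or.inl (h v hv)

/-- Equivalence of the two characterizations of the weakened stable dominant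
energy condition. -/
theorem wsdec_characterizations {N : ℕ} (hN : 1 ≤ N)
    (T : Matrix (Fin (N+1)) (Fin (N+1)) ℝ) (hsymm : T.IsSymm) :
    (∀ v : Fin (N+1) → ℝ, FDCausal v → FDTimelike (endo T v) ∨ endo T v = 0) ↔
    (T = 0 ∨ ∀ v : Fin (N+1) → ℝ, FDCausal v → FDTimelike (endo T v)) :=
  wsdec_characterizations_general T hsymm
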